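/- Let X be a Hausdorff space. Two paths p, q : I → X are reparametrization equivalent if and only if there exist a path r : I → X and reparametrizations φ, ψ : I → I such that p = r ∘ φ and q = r ∘ ψ. -/

import Mathlib

open unitInterval

/-- `φ` is a reparametrization of the unit interval: a continuous weakly
increasing self-map of `I` with `φ 0 = 0` and `φ 1 = 1` (such a map is
automatically surjective). -/
def IsRepar (φ : I → I) : Prop :=
  Continuous φ ∧ Monotone φ ∧ φ 0 = 0 ∧ φ 1 = 1

/-- Two paths `p, q : I → X` are reparametrization equivalent if
`p ∘ φ = q ∘ ψ` for some reparametrizations `φ, ψ` of `I`. -/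
def ReparEquiv {X : Type*} (p q : I → X) : Prop :=
  ∃ φ ψ : I → I, IsRepar φ ∧ IsRepar ψ ∧ p ∘ φ = q ∘ ψ

/-!
Given reparametrizations `φ, ψ`, walk through the closed set `{(s, t) | φ s = ψ t}` from `(0, 0)`
to `(1, 1)` along the anti-diagonals `s + t = u`, taking the least root on each; this gives
reparametrizations `a, b` with `φ ∘ a = ψ ∘ b`, hence the easy direction.

Conversely, a non-constant path `q` factors as `r ∘ ρ`, where the reparametrization `ρ` collapses
exactly the intervals on which `q` is constant, so that `r` is constant on no nondegenerate
interval; `ρ` is a weighted sum of monotone functions separating `q a ≠ q b`, for `a < b` in a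
countable dense set. If `p ∘ φ = r ∘ (ρ ∘ ψ)`, then `ρ ∘ ψ` is constant wherever `φ` is (otherwise
`r` would be constant on a nondegenerate interval), so `ρ ∘ ψ = η ∘ φ` and `p = r ∘ η`.
-/

open Set Function Topology

namespace IsRepar

variable {φ ψ : I → I}

lemma continuous (h : IsRepar φ) : Continuous φ := h.1

lemma monotone (h : IsRepar φ) : Monotone φ := h.2.1

lemma map_zero (h : IsRepar φ) : φ 0 = 0 := h.2.2.1

lemma map_one (h : IsRepar φ) : φ 1 = 1 := h.2.2.2

lemma _root_.isRepar_id : IsRepar id := ⟨continuous_id, monotone_id, rfl, rfl⟩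

lemma comp (hφ : IsRepar φ) (hψ : IsRepar ψ) : IsRepar (φ ∘ ψ) :=
  ⟨hφ.continuous.comp hψ.continuous, hφ.monotone.comp hψ.monotone,
    by simp [hψ.map_zero, hφ.map_zero], by simp [hψ.map_one, hφ.map_one]⟩

lemma image_Icc (h : IsRepar φ) {s t : I} (hst : s ≤ t) : φ '' Icc s t = Icc (φ s) (φ t) :=
  h.monotone.image_Icc_subset.antisymm (intermediate_value_Icc hst h.continuous.continuousOn)

lemma surjective (h : IsRepar φ) : Surjective φ := fun y ↦ by
  have hy : y ∈ φ '' Icc 0 1 := by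
    rw [h.image_Icc nonneg', h.map_zero, h.map_one]
    exact ⟨nonneg', le_one'⟩
  obtain ⟨x, -, rfl⟩ := hy
  exact ⟨x, rfl⟩

lemma isQuotientMap (h : IsRepar φ) : IsQuotientMap φ :=
  h.continuous.isClosedMap.isQuotientMap h.continuous h.surjective

end IsRepar

section Pullback

variable {φ ψ : I → I}

variable (φ ψ) in
/-- As `u` runs through `[0, 2]`, the point `(pullbackFst φ ψ u, u - pullbackFst φ ψ u)` moves
along the set `{φ s = ψ t}` from `(0, 0)` towards `(1, 1)`. -/
noncomputable def pullbackFst (u : ℝ) : ℝ :=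
  sInf {s : ℝ | 0 ≤ s ∧ IccExtend zero_le_one ψ (u - s) ≤ IccExtend zero_le_one φ s}

lemma pullbackFst_le {u s : ℝ} (hs : 0 ≤ s)
    (h : IccExtend zero_le_one ψ (u - s) ≤ IccExtend zero_le_one φ s) : pullbackFst φ ψ u ≤ s :=
  csInf_le ⟨0, fun _ h ↦ h.1⟩ ⟨hs, h⟩

lemma pullbackFst_mem (hφ : IsRepar φ) (hψ : IsRepar ψ) (u : ℝ) :
    0 ≤ pullbackFst φ ψ u ∧ IccExtend zero_le_one ψ (u - pullbackFst φ ψ u) ≤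
      IccExtend zero_le_one φ (pullbackFst φ ψ u) := by
  have hclosed : IsClosed {s : ℝ | 0 ≤ s ∧ IccExtend zero_le_one ψ (u - s) ≤
      IccExtend zero_le_one φ s} :=
    isClosed_Ici.inter <| isClosed_le (α := I)
      (hψ.continuous.Icc_extend'.comp (continuous_const.sub continuous_id))
      hφ.continuous.Icc_extend'
  exact hclosed.csInf_mem ⟨1, zero_le_one, by simpa [hφ.map_one] using le_one'⟩
    ⟨0, fun _ h ↦ h.1⟩

lemma pullbackFst_le_one (hφ : IsRepar φ) (u : ℝ) : pullbackFst φ ψ u ≤ 1 :=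
  pullbackFst_le zero_le_one (by simpa [hφ.map_one] using le_one')

lemma pullbackFst_zero (hφ : IsRepar φ) (hψ : IsRepar ψ) : pullbackFst φ ψ 0 = 0 :=
  (pullbackFst_le le_rfl (by simp [hψ.map_zero])).antisymm (pullbackFst_mem hφ hψ 0).1

lemma monotone_pullbackFst (hφ : IsRepar φ) (hψ : IsRepar ψ) : Monotone (pullbackFst φ ψ) :=
  fun u u' huu' ↦ csInf_le_csInf ⟨0, fun _ h ↦ h.1⟩
    ⟨1, zero_le_one, by simpa [hφ.map_one] using le_one'⟩
    fun s ⟨hs, h⟩ ↦ ⟨hs, le_trans (hψ.monotone.IccExtend _ (by linarith)) h⟩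

lemma pullbackFst_le_add (hφ : IsRepar φ) (hψ : IsRepar ψ) {u u' : ℝ} (huu' : u ≤ u') :
    pullbackFst φ ψ u' ≤ pullbackFst φ ψ u + (u' - u) := by
  obtain ⟨h0, h⟩ := pullbackFst_mem hφ hψ u
  refine pullbackFst_le (by linarith) ?_
  calc IccExtend zero_le_one ψ (u' - (pullbackFst φ ψ u + (u' - u)))
      = IccExtend zero_le_one ψ (u - pullbackFst φ ψ u) := by ring_nf
    _ ≤ IccExtend zero_le_one φ (pullbackFst φ ψ u) := h
    _ ≤ _ := hφ.monotone.IccExtend _ (by linarith)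

lemma lipschitzWith_pullbackFst (hφ : IsRepar φ) (hψ : IsRepar ψ) :
    LipschitzWith 1 (pullbackFst φ ψ) := by
  refine LipschitzWith.of_le_add fun u u' ↦ ?_
  rcases le_total u u' with huu' | hu'u
  · linarith [monotone_pullbackFst hφ hψ huu', dist_nonneg (x := u) (y := u')]
  · linarith [pullbackFst_le_add hφ hψ hu'u, Real.dist_eq u u', le_abs_self (u - u')]

/-- The reverse inequality holds at `s = 0`, so by the intermediate value theorem a root lies in
`[0, pullbackFst φ ψ u]`; by minimality it is the right endpoint. -/
lemma pullbackFst_spec (hφ : IsRepar φ) (hψ : IsRepar ψ) (u : ℝ) :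
    IccExtend zero_le_one φ (pullbackFst φ ψ u) =
      IccExtend zero_le_one ψ (u - pullbackFst φ ψ u) := by
  obtain ⟨h0, h⟩ := pullbackFst_mem hφ hψ u
  obtain ⟨s, hs, hroot⟩ := isPreconnected_Icc.intermediate_value₂
    (left_mem_Icc.2 h0) (right_mem_Icc.2 h0) hφ.continuous.Icc_extend'.continuousOn
    (hψ.continuous.Icc_extend'.comp (continuous_const.sub continuous_id)).continuousOn
    (by simp [hφ.map_zero]) h
  have : pullbackFst φ ψ u ≤ s := pullbackFst_le hs.1 hroot.ge
  rwa [le_antisymm hs.2 this] at hroot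

lemma IccExtend_max_pullbackFst (hφ : IsRepar φ) (hψ : IsRepar ψ) (u : ℝ) :
    IccExtend zero_le_one φ (max (pullbackFst φ ψ u) (u - 1)) =
      IccExtend zero_le_one ψ (u - pullbackFst φ ψ u) := by
  rw [(hφ.monotone.IccExtend _).map_max, pullbackFst_spec hφ hψ, max_eq_left_iff]
  rcases le_total 1 (u - pullbackFst φ ψ u) with h | h
  · rw [IccExtend_of_right_le _ _ h]
    exact le_of_le_of_eq le_one' hψ.map_one.symm
  · rw [← pullbackFst_spec hφ hψ]
    exact hφ.monotone.IccExtend _ (by linarith)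

theorem IsRepar.exists_comp_eq_comp (hφ : IsRepar φ) (hψ : IsRepar ψ) :
    ∃ a b : I → I, IsRepar a ∧ IsRepar b ∧ φ ∘ a = ψ ∘ b := by
  set A := pullbackFst φ ψ
  have hA : Continuous A := (lipschitzWith_pullbackFst hφ hψ).continuous
  have hA_mono : Monotone A := monotone_pullbackFst hφ hψ
  have hA_sub : Monotone fun u ↦ u - A u := fun u u' h ↦ by
    linarith [pullbackFst_le_add hφ hψ h]
  have h2 : Monotone fun w : I ↦ 2 * (w : ℝ) := fun _ _ h ↦
    mul_le_mul_of_nonneg_left h zero_le_two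
  -- `A u < u - 1` happens when `φ` reaches `1` early; there `ψ` is already `1` at `u - A u`, and
  -- the first coordinate follows `u - 1` instead, so that it still ends at `1`.
  refine ⟨fun w ↦ projIcc 0 1 zero_le_one (max (A (2 * w)) (2 * w - 1)),
    fun w ↦ projIcc 0 1 zero_le_one (2 * w - A (2 * w)), ⟨by fun_prop, ?_, ?_, ?_⟩,
    ⟨by fun_prop, ?_, ?_, ?_⟩, funext fun w ↦ IccExtend_max_pullbackFst hφ hψ _⟩
  · exact monotone_projIcc _ |>.comp <|
      (hA_mono.comp h2).max fun _ _ h ↦ sub_le_sub_right (h2 h) 1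
  · simp [A, pullbackFst_zero hφ hψ]
  · exact projIcc_of_right_le _ (le_max_of_le_right (by norm_num))
  · exact monotone_projIcc _ |>.comp <| hA_sub.comp h2
  · simp [A, pullbackFst_zero hφ hψ]
  · refine projIcc_of_right_le _ ?_
    simp only [Icc.coe_one, mul_one]
    linarith [pullbackFst_le_one (ψ := ψ) hφ 2]

end Pullback

theorem Monotone.of_comp_surjective {α β γ : Type*} [LinearOrder α] [PartialOrder β] [Preorder γ]
    {f : α → β} {g : β → γ} (hf : Monotone f) (hf_surj : Surjective f) (h : Monotone (g ∘ f)) :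
    Monotone g := by
  intro y y' hyy'
  obtain ⟨s, rfl⟩ := hf_surj y
  obtain ⟨t, rfl⟩ := hf_surj y'
  rcases le_total s t with hst | hts
  · exact h hst
  · rw [le_antisymm hyy' (hf hts)]

namespace IsRepar

variable {α β : I → I}

lemma exists_continuous_comp_eq {Y : Type*} [TopologicalSpace Y] (hα : IsRepar α) {f : I → Y}
    (hf : Continuous f) (hfib : ∀ s t, α s = α t → f s = f t) :
    ∃ g : I → Y, Continuous g ∧ f = g ∘ α := by
  have hfg : f = (f ∘ surjInv hα.surjective) ∘ α :=
    funext fun t ↦ hfib _ _ (surjInv_eq hα.surjective (α t)).symm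
  exact ⟨_, hα.isQuotientMap.continuous_iff.2 (hfg ▸ hf), hfg⟩

lemma exists_isRepar_eq_comp (hα : IsRepar α) (hβ : IsRepar β)
    (hfib : ∀ s t, α s = α t → β s = β t) : ∃ η : I → I, IsRepar η ∧ β = η ∘ α := by
  obtain ⟨η, hη, rfl⟩ := hα.exists_continuous_comp_eq hβ.continuous hfib
  refine ⟨η, ⟨hη, hα.monotone.of_comp_surjective hα.surjective hβ.monotone, ?_, ?_⟩, rfl⟩
  · simpa [hα.map_zero] using hβ.map_zero
  · simpa [hα.map_one] using hβ.map_one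

theorem exists_isRepar_eq_comp_of_comp_eq {X : Type*} {f g : I → X} (hα : IsRepar α)
    (hβ : IsRepar β) (hg : ∀ s t, s < t → (g '' Icc s t).Nontrivial) (h : f ∘ α = g ∘ β) :
    ∃ η : I → I, IsRepar η ∧ f = g ∘ η := by
  have hfib_le : ∀ s t, s ≤ t → α s = α t → β s = β t := by
    intro s t hst hαst
    by_contra hne
    refine (hg _ _ ((hβ.monotone hst).lt_of_ne hne)).not_subsingleton ?_
    rw [← hβ.image_Icc hst, image_image, ← comp_def, ← h, image_comp, hα.image_Icc hst, hαst,
      Icc_self, image_singleton]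
    exact subsingleton_singleton
  have hfib : ∀ s t, α s = α t → β s = β t := fun s t hαst ↦ (le_total s t).elim
    (hfib_le s t · hαst) fun hts ↦ (hfib_le t s hts hαst.symm).symm
  obtain ⟨η, hη, rfl⟩ := hα.exists_isRepar_eq_comp hβ hfib
  exact ⟨η, hη, hα.surjective.injective_comp_right h⟩

end IsRepar

section RunningSup

variable {α : Type*} [LinearOrder α] {k : α → ℝ}

/-- `runningSup k t = sup_{x ≤ t} k x`. -/
noncomputable def runningSup (k : α → ℝ) (t : α) : ℝ := ⨆ x, k (min x t)

lemma runningSup_le {t : α} {c : ℝ} (h : ∀ x ≤ t, k x ≤ c) : runningSup k t ≤ c :=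
  have : Nonempty α := ⟨t⟩
  ciSup_le fun x ↦ h _ (min_le_right x t)

variable [TopologicalSpace α] [CompactSpace α]

lemma le_runningSup (hk : Continuous k) {x t : α} (hxt : x ≤ t) : k x ≤ runningSup k t :=
  calc k x = k (min x t) := by rw [min_eq_left hxt]
    _ ≤ runningSup k t :=
      le_ciSup ((isCompact_range hk).bddAbove.mono (range_comp_subset_range (min · t) k)) x

lemma monotone_runningSup (hk : Continuous k) : Monotone (runningSup k) := fun _ _ hst ↦
  runningSup_le fun _ hx ↦ le_runningSup hk (hx.trans hst)

lemma continuous_runningSup [OrderClosedTopology α] (hk : Continuous k) :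
    Continuous (runningSup k) := by
  have := isCompact_univ.continuous_sSup (f := fun t x ↦ k (min x t)) (by fun_prop)
  simp only [image_univ] at this
  exact this

lemma runningSup_eq_of_forall_mem_Icc (hk : Continuous k) {s t : α} (hst : s ≤ t)
    (hconst : ∀ x ∈ Icc s t, k x = k s) : runningSup k s = runningSup k t := by
  refine (monotone_runningSup hk hst).antisymm (runningSup_le fun x hxt ↦ ?_)
  rcases le_total x s with hxs | hsx
  · exact le_runningSup hk hxs
  · exact (hconst x ⟨hsx, hxt⟩).trans_le (le_runningSup hk le_rfl)

end RunningSup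

lemma exists_monotone_eq_iff_forall_eq {α ι : Type*} [TopologicalSpace α] [Preorder α]
    [Countable ι] {g : ι → α → ℝ} (hc : ∀ i, Continuous (g i)) (hm : ∀ i, Monotone (g i))
    (hb : ∀ i t, |g i t| ≤ 1) :
    ∃ F : α → ℝ, Continuous F ∧ Monotone F ∧ ∀ s t, s ≤ t → (F s = F t ↔ ∀ i, g i s = g i t) := by
  cases nonempty_encodable ι
  obtain ⟨w, hw, c, hwc, -⟩ := posSumOfEncodable zero_lt_one ι
  have hbound : ∀ i t, ‖w i * g i t‖ ≤ w i := fun i t ↦ by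
    rw [norm_mul, Real.norm_of_nonneg (hw i).le, Real.norm_eq_abs]
    exact mul_le_of_le_one_right (hw i).le (hb i t)
  have hsum : ∀ t, Summable fun i ↦ w i * g i t := fun t ↦ hwc.summable.of_norm_bounded (hbound · t)
  have hle : ∀ s t, s ≤ t → (fun i ↦ w i * g i s) ≤ fun i ↦ w i * g i t :=
    fun s t hst i ↦ mul_le_mul_of_nonneg_left (hm i hst) (hw i).le
  refine ⟨fun t ↦ ∑' i, w i * g i t,
    continuous_tsum (fun i ↦ continuous_const.mul (hc i)) hwc.summable hbound,
    fun s t hst ↦ Summable.tsum_le_tsum (hle s t hst) (hsum s) (hsum t),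
    fun s t hst ↦ ⟨fun h i ↦ ?_, fun h ↦ tsum_congr fun i ↦ by rw [h i]⟩⟩
  by_contra hne
  exact (Summable.tsum_lt_tsum (hle s t hst)
    (mul_lt_mul_of_pos_left ((hm i hst).lt_of_ne hne) (hw i)) (hsum s) (hsum t)).ne h

lemma exists_isRepar_eq_iff {F : I → ℝ} (hc : Continuous F) (hm : Monotone F) (h01 : F 0 < F 1) :
    ∃ ρ : I → I, IsRepar ρ ∧ ∀ s t, ρ s = ρ t ↔ F s = F t := by
  have hd : 0 < F 1 - F 0 := sub_pos.2 h01
  have hmem : ∀ t, (F t - F 0) / (F 1 - F 0) ∈ Icc (0 : ℝ) 1 := fun t ↦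
    ⟨div_nonneg (sub_nonneg.2 (hm nonneg')) hd.le,
      (div_le_one hd).2 (sub_le_sub_right (hm le_one') _)⟩
  refine ⟨fun t ↦ ⟨_, hmem t⟩, ⟨((hc.sub continuous_const).div_const _).subtype_mk hmem,
    fun s t hst ↦ div_le_div_of_nonneg_right (sub_le_sub_right (hm hst) _) hd.le,
    Subtype.ext (by simp), Subtype.ext (by simp [div_self hd.ne'])⟩, fun s t ↦ ?_⟩
  simp [Subtype.ext_iff, div_left_inj' hd.ne']

section Regularize

variable {X : Type*} [TopologicalSpace X] [T2Space X] {q : I → X}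

/-- Urysohn's lemma on the compact image of `q` separates `q a` from `q b`; the running supremum
of the separating function, frozen up to time `a`, is monotone and still constant wherever `q`
is. -/
lemma exists_monotone_separating (hq : Continuous q) {a b : I} (hab : a ≤ b) (hne : q a ≠ q b) :
    ∃ g : I → ℝ, Continuous g ∧ Monotone g ∧ (∀ t, |g t| ≤ 1) ∧ g a < g b ∧
      ∀ s t, s ≤ t → (q '' Icc s t).Subsingleton → g s = g t := by
  have : CompactSpace (range q) := isCompact_iff_compactSpace.mp (isCompact_range hq)
  obtain ⟨h, ha, hb, h01⟩ := exists_continuous_zero_one_of_isClosed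
    (isClosed_singleton (x := (⟨q a, a, rfl⟩ : range q))) (isClosed_singleton (x := ⟨q b, b, rfl⟩))
    (disjoint_singleton.2 fun h ↦ hne (congrArg Subtype.val h))
  set k : I → ℝ := fun x ↦ h ⟨q (max a x), _, rfl⟩
  have hk : Continuous k :=
    h.continuous.comp ((hq.comp (continuous_const.max continuous_id)).subtype_mk _)
  have hk01 : ∀ x, k x ∈ Icc (0 : ℝ) 1 := fun x ↦ h01 _
  have hk_const : ∀ s t, s ≤ t → (q '' Icc s t).Subsingleton → ∀ x ∈ Icc s t, k x = k s := by
    intro s t hst hconst x hx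
    rcases le_or_gt a t with hat | hta
    · have hmem : ∀ y ∈ Icc s t, max a y ∈ Icc s t :=
        fun y hy ↦ ⟨le_max_of_le_right hy.1, max_le hat hy.2⟩
      simp only [k, hconst (mem_image_of_mem q (hmem x hx))
        (mem_image_of_mem q (hmem s (left_mem_Icc.2 hst)))]
    · simp only [k, max_eq_left (hx.2.trans hta.le), max_eq_left (hst.trans hta.le)]
  refine ⟨runningSup k, continuous_runningSup hk, monotone_runningSup hk, fun t ↦ abs_le.2
    ⟨by linarith [(hk01 t).1, le_runningSup hk (le_refl t)], runningSup_le fun x _ ↦ (hk01 x).2⟩,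
    ?_, fun s t hst hconst ↦ runningSup_eq_of_forall_mem_Icc hk hst (hk_const s t hst hconst)⟩
  calc runningSup k a ≤ 0 := runningSup_le fun x hx ↦ by simp [k, max_eq_left hx, ha rfl]
    _ < 1 := zero_lt_one
    _ = k b := by simp [k, max_eq_right hab, hb rfl]
    _ ≤ runningSup k b := le_runningSup hk le_rfl

/-- Otherwise `q` would be constant on `closure (Ioo s t ∩ D) ⊇ Icc s t`. -/
lemma Dense.exists_lt_ne_of_not_subsingleton (hq : Continuous q) {D : Set I} (hD : Dense D)
    {s t : I} (h : ¬ (q '' Icc s t).Subsingleton) :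
    ∃ a ∈ D, ∃ b ∈ D, s ≤ a ∧ a < b ∧ b ≤ t ∧ q a ≠ q b := by
  have hst : s < t := lt_of_not_ge fun hts ↦ h ((subsingleton_Icc_of_ge hts).image q)
  have hD_image : ¬ (q '' (Ioo s t ∩ D)).Subsingleton := by
    refine fun hsub ↦ h (hsub.closure.anti ?_)
    calc q '' Icc s t = q '' closure (Ioo s t) := by rw [closure_Ioo hst.ne]
      _ ⊆ q '' closure (Ioo s t ∩ D) :=
        image_mono (closure_minimal (hD.open_subset_closure_inter isOpen_Ioo) isClosed_closure)
      _ ⊆ closure (q '' (Ioo s t ∩ D)) := image_closure_subset_closure_image hq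
  obtain ⟨_, ⟨a, ha, rfl⟩, _, ⟨b, hb, rfl⟩, hne⟩ := not_subsingleton_iff.1 hD_image
  rcases lt_or_gt_of_ne (ne_of_apply_ne q hne) with hab | hba
  · exact ⟨a, ha.2, b, hb.2, ha.1.1.le, hab, hb.1.2.le, hne⟩
  · exact ⟨b, hb.2, a, ha.2, hb.1.1.le, hba, ha.1.2.le, hne.symm⟩

theorem exists_isRepar_eq_iff_subsingleton (hq : Continuous q)
    (hq_nonconst : ¬ (q '' Icc 0 1).Subsingleton) :
    ∃ ρ : I → I, IsRepar ρ ∧ ∀ s t, s ≤ t → (ρ s = ρ t ↔ (q '' Icc s t).Subsingleton) := by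
  obtain ⟨D, hD_count, hD⟩ := TopologicalSpace.exists_countable_dense I
  set T := {e : I × I | e.1 ∈ D ∧ e.2 ∈ D ∧ e.1 < e.2 ∧ q e.1 ≠ q e.2}
  have hT : T.Countable := (hD_count.prod hD_count).mono fun _ he ↦ mk_mem_prod he.1 he.2.1
  have : Countable T := hT.to_subtype
  choose g hg_cont hg_mono hg_bound hg_lt hg_const using
    fun e : T ↦ exists_monotone_separating hq e.2.2.2.1.le e.2.2.2.2
  obtain ⟨F, hF_cont, hF_mono, hF⟩ := exists_monotone_eq_iff_forall_eq hg_cont hg_mono hg_bound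
  have hF_eq : ∀ s t, s ≤ t → (F s = F t ↔ (q '' Icc s t).Subsingleton) := by
    intro s t hst
    rw [hF s t hst]
    refine ⟨fun h ↦ by_contra fun hnc ↦ ?_, fun h e ↦ hg_const e s t hst h⟩
    obtain ⟨a, ha, b, hb, hsa, hab, hbt, hne⟩ := hD.exists_lt_ne_of_not_subsingleton hq hnc
    let e : T := ⟨(a, b), ha, hb, hab, hne⟩
    exact ((hg_mono e hsa).trans_lt ((hg_lt e).trans_le (hg_mono e hbt))).ne (h e)
  obtain ⟨ρ, hρ, hρF⟩ := exists_isRepar_eq_iff hF_cont hF_mono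
    ((hF_mono nonneg').lt_of_ne fun h ↦ hq_nonconst ((hF_eq 0 1 nonneg').1 h))
  exact ⟨ρ, hρ, fun s t hst ↦ (hρF s t).trans (hF_eq s t hst)⟩

theorem exists_eq_comp_isRepar_nowhere_constant (hq : Continuous q)
    (hq_nonconst : ¬ (q '' Icc 0 1).Subsingleton) :
    ∃ (r : I → X) (ρ : I → I), Continuous r ∧ IsRepar ρ ∧ q = r ∘ ρ ∧
      ∀ s t, s < t → (r '' Icc s t).Nontrivial := by
  obtain ⟨ρ, hρ, hρq⟩ := exists_isRepar_eq_iff_subsingleton hq hq_nonconst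
  have hfib_le : ∀ s t, s ≤ t → ρ s = ρ t → q s = q t := fun s t hst h ↦
    (hρq s t hst).1 h (mem_image_of_mem q (left_mem_Icc.2 hst))
      (mem_image_of_mem q (right_mem_Icc.2 hst))
  obtain ⟨r, hr, rfl⟩ := hρ.exists_continuous_comp_eq hq fun s t h ↦ (le_total s t).elim
    (hfib_le s t · h) fun hts ↦ (hfib_le t s hts h.symm).symm
  refine ⟨r, ρ, hr, hρ, rfl, fun y y' hyy' ↦ not_subsingleton_iff.1 fun hsub ↦ hyy'.ne ?_⟩
  obtain ⟨s, rfl⟩ := hρ.surjective y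
  obtain ⟨t, rfl⟩ := hρ.surjective y'
  have hst : s ≤ t := le_of_not_gt fun hts ↦ hyy'.not_ge (hρ.monotone hts.le)
  refine (hρq s t hst).2 (hsub.anti ?_)
  rw [image_comp]
  exact image_mono hρ.monotone.image_Icc_subset

end Regularize

theorem reparEquiv_iff_common_source_general
    {X : Type*} [TopologicalSpace X] [T2Space X]
    (p q : I → X) (hq : Continuous q) :
    ReparEquiv p q ↔
      ∃ (r : I → X) (φ ψ : I → I), Continuous r ∧ IsRepar φ ∧ IsRepar ψ ∧
        p = r ∘ φ ∧ q = r ∘ ψ := by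
  constructor
  · rintro ⟨φ, ψ, hφ, hψ, h⟩
    by_cases hq_const : (q '' Icc 0 1).Subsingleton
    · have hq0 : ∀ t, q t = q 0 := fun t ↦ hq_const (mem_image_of_mem q ⟨nonneg', le_one'⟩)
        (mem_image_of_mem q ⟨le_rfl, nonneg'⟩)
      have hpq : p = q := funext fun t ↦ by
        obtain ⟨x, rfl⟩ := hφ.surjective t
        rw [← comp_apply (f := p), h, comp_apply, hq0 (ψ x), hq0 (φ x)]
      exact ⟨q, id, id, hq, isRepar_id, isRepar_id, hpq, rfl⟩
    · obtain ⟨r, ρ, hr, hρ, rfl, hr_nontriv⟩ :=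
        exists_eq_comp_isRepar_nowhere_constant hq hq_const
      obtain ⟨η, hη, rfl⟩ := hφ.exists_isRepar_eq_comp_of_comp_eq (hρ.comp hψ) hr_nontriv h
      exact ⟨r, η, ρ, hr, hη, hρ, rfl, rfl⟩
  · rintro ⟨r, φ, ψ, -, hφ, hψ, rfl, rfl⟩
    obtain ⟨a, b, ha, hb, hab⟩ := hφ.exists_comp_eq_comp hψ
    exact ⟨a, b, ha, hb, by rw [comp_assoc, comp_assoc, hab]⟩

/-- Paths `p, q : I → X` in a Hausdorff space are reparametrization
equivalent if and only if there are a path `r` and reparametrizations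
`φ, ψ` with `p = r ∘ φ` and `q = r ∘ ψ`. -/
theorem reparEquiv_iff_common_source
    {X : Type*} [TopologicalSpace X] [T2Space X]
    (p q : I → X) (hp : Continuous p) (hq : Continuous q) :
    ReparEquiv p q ↔
      ∃ (r : I → X) (φ ψ : I → I), Continuous r ∧ IsRepar φ ∧ IsRepar ψ ∧
        p = r ∘ φ ∧ q = r ∘ ψ :=
  reparEquiv_iff_common_source_general p q hq
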